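/- arXiv:2302.06653 — 2 statements merged into one kernel-verified Lean document; each statement's English description precedes it below -/
import Mathlib

section
/- Let G be a simple graph without isolated vertices whose edges are enumerated e₁,…,e_m, and let (G′,λ) be the temporal graph constructed as follows: G′ has two special vertices s and z and, for each u ∈ V(G), an s,z-path Q_u with exactly deg(u) edges, where the paths Q_u are pairwise internally vertex disjoint; λ assigns to the edges of Q_u, in order from s to z, the increasing sequence of indices i such that e_i is incident to u (so each Q_u is a temporal s,z-path with λ(E(Q_u)) = {i : e_i is incident to u}). Then G has an independent set of size at least k if and only if (G′,λ) has at least k pairwise snapshot disjoint temporal s,z-paths. -/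
/-!
The paths `Q u` are internally disjoint and cover `G'`, so a temporal `s,z`-path can never
leave the `Q u` containing its first edge: that would happen at an inner vertex shared by two
of them. A path running inside the path `Q u` between the same ends is `Q u` itself. Hence the
temporal `s,z`-paths are exactly the `Q u`, and `Q u`, `Q v` share a timestep iff `u = v` or
some edge `e_i` is incident to both, i.e. iff `u` and `v` are equal or adjacent.
-/

/-- A (finite, loopless) multigraph: a vertex type, an edge type, and an
endpoints function assigning to each edge an unordered pair of distinct vertices. -/
structure Multigraph where
  V : Type
  E : Type
  fintypeV : Fintype V
  decEqV : DecidableEq V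
  fintypeE : Fintype E
  decEqE : DecidableEq E
  ends : E → Sym2 V
  loopless : ∀ e, ¬ (ends e).IsDiag

attribute [instance] Multigraph.fintypeV Multigraph.decEqV Multigraph.fintypeE Multigraph.decEqE

/-- A temporal `s,z`-path in the temporal graph `(G, lam)`: an alternating sequence of
pairwise distinct vertices and edges, starting at `s`, ending at `z`, whose edges appear
at non-decreasing timesteps. -/
structure TPath (G : Multigraph) (lam : G.E → ℕ) (s z : G.V) where
  verts : List G.V
  edges : List G.E
  len_eq : verts.length = edges.length + 1
  head_eq : verts.head? = some s
  last_eq : verts.getLast? = some z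
  nodup : verts.Nodup
  ends_eq : ∀ (i : ℕ) (h : i < edges.length),
      G.ends (edges.get ⟨i, h⟩) = s(verts.get ⟨i, by omega⟩, verts.get ⟨i + 1, by omega⟩)
  mono : List.Chain' (· ≤ ·) (edges.map lam)

/-- The set of timesteps at which a temporal path is active. -/
def TPath.times {G : Multigraph} {lam : G.E → ℕ} {s z : G.V} (P : TPath G lam s z) : Set ℕ :=
  {t | ∃ e ∈ P.edges, lam e = t}

/-- Two temporal `s,z`-paths are snapshot disjoint if they are not both active at any
common timestep. -/
def SnapDisjoint {G : Multigraph} {lam : G.E → ℕ} {s z : G.V} (P Q : TPath G lam s z) : Prop :=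
  P.times ∩ Q.times = ∅

/-- A set `S` of timesteps is a snapshot `s,z`-cut if every temporal `s,z`-path uses an
edge active at some timestep in `S`. -/
def IsSnapCut (G : Multigraph) (lam : G.E → ℕ) (s z : G.V) (S : Set ℕ) : Prop :=
  ∀ P : TPath G lam s z, ∃ e ∈ P.edges, lam e ∈ S

/-- `maxD G lam s z`: the maximum number of pairwise snapshot disjoint temporal `s,z`-paths. -/
noncomputable def maxD (G : Multigraph) (lam : G.E → ℕ) (s z : G.V) : ℕ :=
  sSup {k | ∃ f : Fin k → TPath G lam s z, ∀ i j, i ≠ j → SnapDisjoint (f i) (f j)}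

/-- `minC G lam s z`: the minimum size of a snapshot `s,z`-cut. -/
noncomputable def minC (G : Multigraph) (lam : G.E → ℕ) (s z : G.V) : ℕ :=
  sInf {h | ∃ S : Finset ℕ, S.card = h ∧ IsSnapCut G lam s z ↑S}

/-- A proper timefunction: each edge is active at a positive timestep, and no two parallel
edges are active at the same timestep. -/
def ProperTime (G : Multigraph) (lam : G.E → ℕ) : Prop :=
  (∀ e, 0 < lam e) ∧ ∀ e f, e ≠ f → G.ends e = G.ends f → lam e ≠ lam f

/-- `G` is Mengerian for time: for every proper timefunction and every pair of distinct
vertices, the maximum number of pairwise snapshot disjoint temporal `s,z`-paths equals the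
minimum size of a snapshot `s,z`-cut. -/
def Mengerian (G : Multigraph) : Prop :=
  ∀ lam : G.E → ℕ, ProperTime G lam → ∀ s z : G.V, s ≠ z →
    maxD G lam s z = minC G lam s z

/-- `H` is a subgraph of `G` (up to isomorphism): `H` embeds into `G`. -/
def IsSubgraph (H G : Multigraph) : Prop :=
  ∃ (fv : H.V → G.V) (fe : H.E → G.E),
    Function.Injective fv ∧ Function.Injective fe ∧
    ∀ e, G.ends (fe e) = (H.ends e).map fv

/-- The m-subdivision of the multiedge `xy` of `G`: delete all edges between `x` and `y`,
add a new vertex (`none`), and join it to each of `x` and `y` by as many parallel edges as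
there were between `x` and `y`. -/
def Multigraph.msubdiv (G : Multigraph) (x y : G.V) : Multigraph where
  V := Option G.V
  E := {e : G.E // G.ends e ≠ s(x, y)} ⊕ ({e : G.E // G.ends e = s(x, y)} × Bool)
  fintypeV := inferInstance
  decEqV := inferInstance
  fintypeE := inferInstance
  decEqE := inferInstance
  ends := fun t =>
    match t with
    | .inl e => (G.ends e.1).map some
    | .inr (_, true) => s(some x, (none : Option G.V))
    | .inr (_, false) => s((none : Option G.V), some y)
  loopless := by
    rintro (⟨e, he⟩ | ⟨e, b⟩)
    · simpa [Sym2.isDiag_map (Option.some_injective _)] using G.loopless e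
    · cases b <;> simp [Sym2.mk_isDiag_iff]

/-- Isomorphism of multigraphs. -/
def MIso (G H : Multigraph) : Prop :=
  ∃ (fv : G.V ≃ H.V) (fe : G.E ≃ H.E), ∀ e, H.ends (fe e) = (G.ends e).map fv

/-- `B` is obtained from `A` by m-subdividing one of its multiedges. -/
def SubdivStep (A B : Multigraph) : Prop :=
  ∃ x y : A.V, (∃ e, A.ends e = s(x, y)) ∧ MIso (A.msubdiv x y) B

/-- `H` is an m-topological minor of `G`: some subgraph of `G` can be obtained from `H` by
a sequence of m-subdivisions. -/
def IsMTopMinor (H G : Multigraph) : Prop :=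
  ∃ K, Relation.ReflTransGen SubdivStep H K ∧ IsSubgraph K G

/-- The multigraph obtained from `G` by keeping only the edges satisfying `P`. -/
def Multigraph.restrictE (G : Multigraph) (P : G.E → Prop) [DecidablePred P] : Multigraph where
  V := G.V
  E := {e : G.E // P e}
  fintypeV := G.fintypeV
  decEqV := G.decEqV
  fintypeE := inferInstance
  decEqE := inferInstance
  ends := fun e => G.ends e.1
  loopless := fun e => G.loopless e.1

/-- The underlying simple graph of a multigraph. -/
def Multigraph.simple (G : Multigraph) : SimpleGraph G.V where
  Adj u v := ∃ e, G.ends e = s(u, v)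
  symm := by
    constructor
    rintro u v ⟨e, he⟩
    exact ⟨e, by rw [he, Sym2.eq_swap]⟩
  loopless := by
    constructor
    rintro u ⟨e, he⟩
    exact G.loopless e (by rw [he]; exact Sym2.mk_isDiag_iff.2 rfl)

namespace TPath

variable {G : Multigraph} {lam : G.E → ℕ} {s z : G.V} (P R : TPath G lam s z)

lemma getElem_verts_zero : P.verts[0]'(by simp [P.len_eq]) = s := by
  have h := P.head_eq
  rwa [List.head?_eq_getElem?, List.getElem?_eq_getElem (by simp [P.len_eq]),
    Option.some_inj] at h

lemma getElem_verts_edges_length : P.verts[P.edges.length]'(by simp [P.len_eq]) = z := by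
  have h := P.last_eq
  rwa [List.getLast?_eq_getElem?, P.len_eq, Nat.add_sub_cancel,
    List.getElem?_eq_getElem (by simp [P.len_eq]), Option.some_inj] at h

lemma ends_getElem (i : ℕ) (h : i < P.edges.length) :
    G.ends P.edges[i] =
      s(P.verts[i]'(by simp [P.len_eq]; omega), P.verts[i + 1]'(by simp [P.len_eq]; omega)) :=
  P.ends_eq i h

lemma edges_length_pos (hsz : s ≠ z) : 0 < P.edges.length := by
  refine Nat.pos_of_ne_zero fun h => hsz ?_
  have hz := P.getElem_verts_edges_length
  simp only [h] at hz
  exact P.getElem_verts_zero.symm.trans hz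

lemma mem_verts_of_mem_ends {e : G.E} (he : e ∈ P.edges) {x : G.V} (hx : x ∈ G.ends e) :
    x ∈ P.verts := by
  obtain ⟨i, hi, rfl⟩ := List.getElem_of_mem he
  rw [P.ends_getElem i hi, Sym2.mem_iff] at hx
  rcases hx with rfl | rfl <;> exact List.getElem_mem _

lemma getElem_verts_ne_start {i : ℕ} (hi : i < P.verts.length) (h0 : 0 < i) :
    P.verts[i] ≠ s :=
  fun h => h0.ne' (P.nodup.getElem_inj_iff.mp (h.trans P.getElem_verts_zero.symm))

lemma getElem_verts_ne_end {i : ℕ} (hi : i < P.edges.length) :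
    P.verts[i]'(by simp [P.len_eq]; omega) ≠ z :=
  fun h => hi.ne (P.nodup.getElem_inj_iff.mp (h.trans P.getElem_verts_edges_length.symm))

lemma eq_of_ends_getElem_eq {a b : ℕ} (ha : a < P.edges.length) (hb : b < P.edges.length)
    (h : G.ends P.edges[a] = G.ends P.edges[b]) : a = b := by
  rw [P.ends_getElem a ha, P.ends_getElem b hb] at h
  rcases Sym2.eq_iff.mp h with ⟨h1, -⟩ | ⟨h1, h2⟩
  · exact P.nodup.getElem_inj_iff.mp h1
  · have := P.nodup.getElem_inj_iff.mp h1
    have := P.nodup.getElem_inj_iff.mp h2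
    omega

variable {P R}

lemma getElem?_verts_eq_of_edges_subset (hsub : ∀ e ∈ P.edges, e ∈ R.edges) :
    ∀ i ≤ P.edges.length, P.verts[i]? = R.verts[i]? := by
  have hlenP := P.len_eq
  have hlenR := R.len_eq
  have agree : ∀ i (hi : i ≤ P.edges.length), P.verts[i]? = R.verts[i]? →
      ∃ h : i < R.verts.length, R.verts[i] = P.verts[i] := fun i hi h => by
    rwa [List.getElem?_eq_getElem (by omega), eq_comm, List.getElem?_eq_some_iff] at h
  intro i
  induction i using Nat.strong_induction_on with
  | _ i ih =>
    intro hi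
    rcases i with _ | a
    · rw [← List.head?_eq_getElem?, ← List.head?_eq_getElem?, P.head_eq, R.head_eq]
    obtain ⟨haR, hva⟩ := agree a (by omega) (ih a (by omega) (by omega))
    obtain ⟨b, hb, hbe⟩ := List.getElem_of_mem (hsub _ (List.getElem_mem (by omega : a < _)))
    have hends := R.ends_getElem b hb
    rw [hbe, P.ends_getElem a (by omega)] at hends
    rcases Sym2.eq_iff.mp hends with ⟨h1, h2⟩ | ⟨h1, h2⟩
    · obtain rfl : a = b := R.nodup.getElem_inj_iff.mp (hva.trans h1)
      rw [List.getElem?_eq_getElem (by omega), List.getElem?_eq_getElem (by omega), h2]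
    · -- `P` would return from `R.verts[a]` to `R.verts[a - 1] = P.verts[a - 1]`
      obtain rfl : a = b + 1 := R.nodup.getElem_inj_iff.mp (hva.trans h1)
      obtain ⟨_, hvb⟩ := agree b (by omega) (ih b (by omega) (by omega))
      have := P.nodup.getElem_inj_iff.mp (h2.trans hvb)
      omega

lemma verts_eq_of_edges_subset (hsub : ∀ e ∈ P.edges, e ∈ R.edges) : P.verts = R.verts := by
  have hv := getElem?_verts_eq_of_edges_subset hsub
  have hz := hv _ le_rfl
  rw [List.getElem?_eq_getElem (by simp [P.len_eq]), P.getElem_verts_edges_length, eq_comm,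
    List.getElem?_eq_some_iff] at hz
  obtain ⟨_, hz⟩ := hz
  have hn : P.edges.length = R.edges.length :=
    R.nodup.getElem_inj_iff.mp (hz.trans R.getElem_verts_edges_length.symm)
  refine List.ext_getElem? fun i => ?_
  rcases le_or_gt i P.edges.length with hi | hi
  · exact hv i hi
  · rw [List.getElem?_eq_none (by simp [P.len_eq]; omega),
      List.getElem?_eq_none (by simp [R.len_eq]; omega)]

lemma edges_eq_of_edges_subset (hsub : ∀ e ∈ P.edges, e ∈ R.edges) : P.edges = R.edges := by
  have hv := verts_eq_of_edges_subset hsub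
  have hn : P.edges.length = R.edges.length := by
    have := congrArg List.length hv
    rw [P.len_eq, R.len_eq] at this
    omega
  refine List.ext_getElem hn fun a ha ha' => ?_
  obtain ⟨b, hb, hbe⟩ := List.getElem_of_mem (hsub _ (List.getElem_mem ha))
  have hends : G.ends R.edges[b] = G.ends R.edges[a] := by
    rw [hbe, P.ends_getElem a ha, R.ends_getElem a ha']
    simp only [hv]
  obtain rfl := R.eq_of_ends_getElem_eq hb ha' hends
  exact hbe.symm

lemma times_eq_of_edges_subset (hsub : ∀ e ∈ P.edges, e ∈ R.edges) : P.times = R.times := by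
  simp only [times, edges_eq_of_edges_subset hsub]

lemma not_snapDisjoint_self (hsz : s ≠ z) : ¬ SnapDisjoint P P := by
  rw [SnapDisjoint, Set.inter_self]
  exact Set.nonempty_iff_ne_empty.mp ⟨_, _, List.getElem_mem (P.edges_length_pos hsz), rfl⟩

end TPath

section InternallyDisjoint

variable {V : Type} {G : Multigraph} {lam : G.E → ℕ} {s z : G.V}

def InternallyDisjoint (Q : V → TPath G lam s z) : Prop :=
  ∀ u v : V, u ≠ v → ∀ x : G.V, x ∈ (Q u).verts → x ∈ (Q v).verts → x = s ∨ x = z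

variable {Q : V → TPath G lam s z}

lemma InternallyDisjoint.eq_of_getElem_edges_mem (hdisj : InternallyDisjoint Q)
    (P : TPath G lam s z) {a : ℕ} (ha : a + 1 < P.edges.length) {u v : V}
    (hu : P.edges[a] ∈ (Q u).edges) (hv : P.edges[a + 1] ∈ (Q v).edges) : u = v := by
  by_contra huv
  have hends := P.ends_getElem a (by omega)
  have hends' := P.ends_getElem (a + 1) ha
  rcases hdisj u v huv _ ((Q u).mem_verts_of_mem_ends hu (hends ▸ Sym2.mem_mk_right _ _))
      ((Q v).mem_verts_of_mem_ends hv (hends' ▸ Sym2.mem_mk_left _ _)) with h | h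
  · exact P.getElem_verts_ne_start _ a.succ_pos h
  · exact P.getElem_verts_ne_end ha h

lemma InternallyDisjoint.exists_edges_subset (hsz : s ≠ z) (hdisj : InternallyDisjoint Q)
    (hcover : ∀ e : G.E, ∃ u : V, e ∈ (Q u).edges) (P : TPath G lam s z) :
    ∃ u, ∀ e ∈ P.edges, e ∈ (Q u).edges := by
  obtain ⟨u, hu⟩ := hcover (P.edges[0]'(P.edges_length_pos hsz))
  have hall : ∀ a (ha : a < P.edges.length), P.edges[a] ∈ (Q u).edges := by
    intro a ha
    induction a with
    | zero => exact hu
    | succ a ih =>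
      obtain ⟨v, hv⟩ := hcover P.edges[a + 1]
      obtain rfl := hdisj.eq_of_getElem_edges_mem P ha (ih (by omega)) hv
      exact hv
  refine ⟨u, fun e he => ?_⟩
  obtain ⟨a, ha, rfl⟩ := List.getElem_of_mem he
  exact hall a ha

end InternallyDisjoint

lemma snapDisjoint_iff_ne_and_not_adj {V : Type} {G : SimpleGraph V} {m : ℕ}
    {eps : G.edgeSet ≃ Fin m} {G' : Multigraph} {lam : G'.E → ℕ} {s z : G'.V} (hsz : s ≠ z)
    {Q : V → TPath G' lam s z}
    (hlabels : ∀ u : V,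
      (Q u).times = {t : ℕ | ∃ d : G.edgeSet, u ∈ (d : Sym2 V) ∧ t = (eps d).val + 1})
    {u v : V} : SnapDisjoint (Q u) (Q v) ↔ u ≠ v ∧ ¬ G.Adj u v := by
  constructor
  · intro h
    refine ⟨?_, fun hadj => ?_⟩
    · rintro rfl
      exact (Q u).not_snapDisjoint_self hsz h
    · let d : G.edgeSet := ⟨s(u, v), G.mem_edgeSet.mpr hadj⟩
      have ht : (eps d).val + 1 ∈ (Q u).times ∩ (Q v).times := by
        rw [hlabels, hlabels]
        exact ⟨⟨d, Sym2.mem_mk_left _ _, rfl⟩, ⟨d, Sym2.mem_mk_right _ _, rfl⟩⟩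
      rw [h] at ht
      exact ht
  · rintro ⟨huv, hnadj⟩
    rw [SnapDisjoint, hlabels, hlabels, Set.eq_empty_iff_forall_notMem]
    rintro t ⟨⟨d, hud, rfl⟩, ⟨d', hvd, hdd⟩⟩
    obtain rfl : d = d' := eps.injective (Fin.ext (by omega))
    have hd : (d : Sym2 V) = s(u, v) := (Sym2.mem_and_mem_iff huv).mp ⟨hud, hvd⟩
    exact hnadj (G.mem_edgeSet.mp (hd ▸ d.2))

theorem stmt17_general (V : Type)
    (G : SimpleGraph V)
    (m : ℕ) (eps : G.edgeSet ≃ Fin m)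
    (G' : Multigraph) (lam : G'.E → ℕ) (s z : G'.V) (hsz : s ≠ z)
    (Q : V → TPath G' lam s z)
    (hdisj : ∀ u v : V, u ≠ v →
      ∀ x : G'.V, x ∈ (Q u).verts → x ∈ (Q v).verts → x = s ∨ x = z)
    (hcover : ∀ ed : G'.E, ∃ u : V, ed ∈ (Q u).edges)
    (hlabels : ∀ u : V,
      (Q u).times = {t : ℕ | ∃ d : G.edgeSet, u ∈ (d : Sym2 V) ∧ t = (eps d).val + 1})
    (k : ℕ) :
    (∃ S : Finset V, k ≤ S.card ∧ ∀ u ∈ S, ∀ v ∈ S, ¬ G.Adj u v) ↔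
      (∃ f : Fin k → TPath G' lam s z, ∀ i j, i ≠ j → SnapDisjoint (f i) (f j)) := by
  constructor
  · rintro ⟨S, hk, hind⟩
    obtain ⟨g⟩ : Nonempty (Fin k ↪ S) :=
      Function.Embedding.nonempty_of_card_le (by simpa using hk)
    refine ⟨fun i => Q (g i), fun i j hij => (snapDisjoint_iff_ne_and_not_adj hsz hlabels).mpr
      ⟨fun h => hij (g.injective (Subtype.ext h)), hind _ (g i).2 _ (g j).2⟩⟩
  · rintro ⟨f, hf⟩
    choose u hu using fun i => InternallyDisjoint.exists_edges_subset hsz hdisj hcover (f i)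
    have hu_indep (i j : Fin k) (hij : i ≠ j) : u i ≠ u j ∧ ¬ G.Adj (u i) (u j) := by
      have := hf i j hij
      rwa [SnapDisjoint, TPath.times_eq_of_edges_subset (hu i),
        TPath.times_eq_of_edges_subset (hu j), ← SnapDisjoint,
        snapDisjoint_iff_ne_and_not_adj hsz hlabels] at this
    refine ⟨Finset.univ.map ⟨u, fun i j h => by_contra fun hij => (hu_indep i j hij).1 h⟩,
      by simp, ?_⟩
    simp only [Finset.mem_map, Finset.mem_univ, true_and]
    rintro _ ⟨i, rfl⟩ _ ⟨j, rfl⟩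
    rcases eq_or_ne i j with rfl | hij
    · exact G.irrefl
    · exact (hu_indep i j hij).2

/-- `G` has an independent set of size at least `k` iff the constructed
temporal graph `(G', λ)` has at least `k` pairwise snapshot disjoint temporal
`s,z`-paths. -/
theorem stmt17 (V : Type) [Fintype V] [DecidableEq V]
    (G : SimpleGraph V) [DecidableRel G.Adj]
    (hdeg : ∀ u : V, 0 < G.degree u)
    (m : ℕ) (eps : G.edgeSet ≃ Fin m)
    (G' : Multigraph) (lam : G'.E → ℕ) (s z : G'.V) (hsz : s ≠ z)
    (Q : V → TPath G' lam s z)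
    (hlen : ∀ u : V, (Q u).edges.length = G.degree u)
    (hdisj : ∀ u v : V, u ≠ v →
      ∀ x : G'.V, x ∈ (Q u).verts → x ∈ (Q v).verts → x = s ∨ x = z)
    (hcover : ∀ ed : G'.E, ∃ u : V, ed ∈ (Q u).edges)
    (hlabels : ∀ u : V,
      (Q u).times = {t : ℕ | ∃ d : G.edgeSet, u ∈ (d : Sym2 V) ∧ t = (eps d).val + 1})
    (k : ℕ) :
    (∃ S : Finset V, k ≤ S.card ∧ ∀ u ∈ S, ∀ v ∈ S, ¬ G.Adj u v) ↔
      (∃ f : Fin k → TPath G' lam s z, ∀ i j, i ≠ j → SnapDisjoint (f i) (f j)) :=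
  stmt17_general V G m eps G' lam s z hsz Q hdisj hcover hlabels k
end

section
/- Let G be a simple graph without isolated vertices whose edges are enumerated e₁,…,e_m, and let (G′,λ) be the temporal graph constructed as follows: G′ has two special vertices s and z and, for each u ∈ V(G), an s,z-path Q_u with exactly deg(u) edges, where the paths Q_u are pairwise internally vertex disjoint; λ assigns to the edges of Q_u, in order from s to z, the increasing sequence of indices i such that e_i is incident to u (so each Q_u is a temporal s,z-path with λ(E(Q_u)) = {i : e_i is incident to u}). Then for every S ⊆ V(G), S is an independent set of G if and only if the paths {Q_u : u ∈ S} are pairwise snapshot disjoint. -/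
namespace SimpleGraph

variable {V α : Type} {G : SimpleGraph V}

def incidentLabels (f : G.edgeSet → α) (u : V) : Set α :=
  {t | ∃ d : G.edgeSet, u ∈ (d : Sym2 V) ∧ t = f d}

theorem disjoint_incidentLabels_iff {f : G.edgeSet → α} (hf : Function.Injective f) {u v : V}
    (huv : u ≠ v) : Disjoint (incidentLabels f u) (incidentLabels f v) ↔ ¬ G.Adj u v := by
  rw [Set.disjoint_left, ← not_iff_not, not_not]
  simp only [not_forall, not_not, exists_prop]
  constructor
  · rintro ⟨_, ⟨d, hud, rfl⟩, d', hvd', hdd'⟩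
    obtain rfl := hf hdd'
    have hd : (d : Sym2 V) = s(u, v) := (Sym2.mem_and_mem_iff huv).mp ⟨hud, hvd'⟩
    exact G.mem_edgeSet.mp (hd ▸ d.2)
  · intro hadj
    exact ⟨f ⟨s(u, v), hadj⟩, ⟨_, Sym2.mem_mk_left u v, rfl⟩, _, Sym2.mem_mk_right u v, rfl⟩

end SimpleGraph

theorem stmt18_general (V : Type)
    (G : SimpleGraph V)
    (m : ℕ) (eps : G.edgeSet ≃ Fin m)
    (G' : Multigraph) (lam : G'.E → ℕ) (s z : G'.V)
    (Q : V → TPath G' lam s z)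
    (hlabels : ∀ u : V,
      (Q u).times = {t : ℕ | ∃ d : G.edgeSet, u ∈ (d : Sym2 V) ∧ t = (eps d).val + 1})
    (S : Set V) :
    (∀ u ∈ S, ∀ v ∈ S, u ≠ v → ¬ G.Adj u v) ↔
      (∀ u ∈ S, ∀ v ∈ S, u ≠ v → SnapDisjoint (Q u) (Q v)) := by
  have hlabel_inj : Function.Injective fun d => (eps d).val + 1 :=
    (add_left_injective 1).comp (Fin.val_injective.comp eps.injective)
  have hsnap {u v : V} (huv : u ≠ v) : SnapDisjoint (Q u) (Q v) ↔ ¬ G.Adj u v := by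
    rw [SnapDisjoint, ← Set.disjoint_iff_inter_eq_empty, hlabels, hlabels]
    exact G.disjoint_incidentLabels_iff hlabel_inj huv
  exact forall₄_congr fun u _ v _ => forall_congr' fun huv => (hsnap huv).symm

/-- a set `S ⊆ V(G)` is an independent set of `G` iff the paths
`{Q_u : u ∈ S}` are pairwise snapshot disjoint. -/
theorem stmt18 (V : Type) [Fintype V] [DecidableEq V]
    (G : SimpleGraph V) [DecidableRel G.Adj]
    (hdeg : ∀ u : V, 0 < G.degree u)
    (m : ℕ) (eps : G.edgeSet ≃ Fin m)
    (G' : Multigraph) (lam : G'.E → ℕ) (s z : G'.V) (hsz : s ≠ z)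
    (Q : V → TPath G' lam s z)
    (hlen : ∀ u : V, (Q u).edges.length = G.degree u)
    (hdisj : ∀ u v : V, u ≠ v →
      ∀ x : G'.V, x ∈ (Q u).verts → x ∈ (Q v).verts → x = s ∨ x = z)
    (hcover : ∀ ed : G'.E, ∃ u : V, ed ∈ (Q u).edges)
    (hlabels : ∀ u : V,
      (Q u).times = {t : ℕ | ∃ d : G.edgeSet, u ∈ (d : Sym2 V) ∧ t = (eps d).val + 1})
    (S : Set V) :
    (∀ u ∈ S, ∀ v ∈ S, u ≠ v → ¬ G.Adj u v) ↔
      (∀ u ∈ S, ∀ v ∈ S, u ≠ v → SnapDisjoint (Q u) (Q v)) :=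
  stmt18_general V G m eps G' lam s z Q hlabels S
end
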